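/- Let G be a reaction network on species X = {X_1,…,X_n} and let ℰ ⊆ X be a set of independently conserved species in G. Let H be any reaction network whose species set is ℰ, and let G∪H be the network on X whose reaction set is the union of the reactions of G and of H, with a choice of rates κ assigning positive rates to all these reactions. If z ∈ ℝ^n_{>0} is a positive steady state of the mass action system (G∪H, κ), then the projection z_ℰ of z onto the coordinates of ℰ is a positive steady state of the mass action system (H, κ|_H), where κ|_H is the restriction of κ to the reactions of H. -/
import Mathlib


/-- A reaction `y → y'` is a pair of complexes, each a vector of
nonnegative integer coefficients indexed by the species: the source and the target. -/
abbrev Reaction (S : Type) : Type := (S → ℕ) × (S → ℕ)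

section General

variable {S : Type} [Fintype S] [DecidableEq S]

/-- The complex consisting of a single copy of species `s`. -/
def unitC (s : S) : S → ℕ := fun t => if t = s then 1 else 0

/-- The complex `a + b`. -/
def pairC (a b : S) : S → ℕ := fun t => (if t = a then 1 else 0) + (if t = b then 1 else 0)

/-- The mass action right-hand side `f_κ` of a network `R` with rates `κ`. -/
def massAction (R : Finset (Reaction S)) (κ : Reaction S → ℝ) (x : S → ℝ) : S → ℝ :=
  fun s => ∑ r ∈ R, κ r * (∏ t, x t ^ r.1 t) * ((r.2 s : ℝ) - (r.1 s : ℝ))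

/-- The stoichiometric subspace of a network: the span of its reaction vectors. -/
def stoichSubspace (R : Finset (Reaction S)) : Submodule ℝ (S → ℝ) :=
  Submodule.span ℝ ((fun r : Reaction S => fun s => ((r.2 s : ℝ) - (r.1 s : ℝ))) '' ↑R)

/-- A positive steady state of the mass action system `(R, κ)`. -/
def isPosSteadyState (R : Finset (Reaction S)) (κ : Reaction S → ℝ) (x : S → ℝ) : Prop :=
  (∀ s, 0 < x s) ∧ massAction R κ x = 0

/-- A steady state is nondegenerate if the kernel of the Jacobian of the mass action
right-hand side intersects the stoichiometric subspace trivially. -/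
def nondegenerate (R : Finset (Reaction S)) (κ : Reaction S → ℝ) (x : S → ℝ) : Prop :=
  ∀ v ∈ stoichSubspace R, fderiv ℝ (massAction R κ) x v = 0 → v = 0

/-- A network admits nondegenerate multistationarity if for some positive rates there are
two distinct nondegenerate positive steady states in the same stoichiometric
compatibility class. -/
def admitsNondegMultistationarity (R : Finset (Reaction S)) : Prop :=
  ∃ κ : Reaction S → ℝ, (∀ r ∈ R, 0 < κ r) ∧
    ∃ x y : S → ℝ, x ≠ y ∧
      isPosSteadyState R κ x ∧ isPosSteadyState R κ y ∧
      nondegenerate R κ x ∧ nondegenerate R κ y ∧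
      y - x ∈ stoichSubspace R

/-- The inflow reaction `0 → s`. -/
def inflow (s : S) : Reaction S := (fun _ => 0, unitC s)

/-- The outflow reaction `s → 0`. -/
def outflow (s : S) : Reaction S := (unitC s, fun _ => 0)

/-- The open network on `E`: add inflow and outflow reactions for every species of `E`. -/
def openOn (R : Finset (Reaction S)) (E : Finset S) : Finset (Reaction S) :=
  R ∪ E.image inflow ∪ E.image outflow

/-- A conservation law: a vector orthogonal to the stoichiometric subspace. -/
def conservationLaw (R : Finset (Reaction S)) (w : S → ℝ) : Prop :=
  ∀ v ∈ stoichSubspace R, ∑ s, w s * v s = 0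

/-- A set `E` of species is independently conserved in `R` if there are conservation laws
`L e` for `e ∈ E` such that `L e` has a nonzero coordinate at `e` and zero coordinate at
`e` for every other `L e'`, `e' ∈ E`. -/
def IndepConserved (R : Finset (Reaction S)) (E : Finset S) : Prop :=
  ∃ L : S → (S → ℝ), ∀ e ∈ E,
    conservationLaw R (L e) ∧ L e e ≠ 0 ∧ ∀ e' ∈ E, e' ≠ e → L e' e = 0

/-- A species is closed in `R` if neither its inflow nor its outflow is a reaction of `R`. -/
def ClosedIn (R : Finset (Reaction S)) (s : S) : Prop :=
  inflow s ∉ R ∧ outflow s ∉ R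

/-- Projection of a complex onto the coordinates outside `E`. -/
def projC (E : Finset S) (y : S → ℕ) : {s : S // s ∉ E} → ℕ := fun s => y s.val

/-- Projection of a reaction onto the coordinates outside `E`. -/
def projR (E : Finset S) (r : Reaction S) : Reaction {s : S // s ∉ E} :=
  (projC E r.1, projC E r.2)

/-- The projected network `G₋E` on the species outside `E`: project all reactions and
remove self-loops. -/
def projNet (R : Finset (Reaction S)) (E : Finset S) : Finset (Reaction {s : S // s ∉ E}) :=
  (R.image (projR E)).filter fun r => r.1 ≠ r.2

/-- Inclusion of a reaction on the species of `E` into a reaction on all of `S`. -/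
def inclR (E : Finset S) (r : Reaction {s : S // s ∈ E}) : Reaction S :=
  (fun s => if h : s ∈ E then r.1 ⟨s, h⟩ else 0,
   fun s => if h : s ∈ E then r.2 ⟨s, h⟩ else 0)

/-- `R` has at most `l` positive steady states in each stoichiometric compatibility class,
for every choice of positive reaction rates: there is no injective family of `l + 1`
positive steady states lying pairwise in the same compatibility class. -/
def atMostPosSS (R : Finset (Reaction S)) (l : ℕ) : Prop :=
  ∀ κ : Reaction S → ℝ, (∀ r ∈ R, 0 < κ r) →
    ∀ f : Fin (l + 1) → (S → ℝ),
      (∀ j, isPosSteadyState R κ (f j)) →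
      (∀ j k, f k - f j ∈ stoichSubspace R) →
      ¬ Function.Injective f

/-- Monostationarity: at most one positive steady state in each stoichiometric
compatibility class, for every choice of positive rates. -/
def monostationary (R : Finset (Reaction S)) : Prop :=
  atMostPosSS R 1

end General

/-- Species of the sequential `n`-site phosphorylation–dephosphorylation cycle:
the enzymes `E`, `F`, the substrates `S i` for `i = 0, …, n`, and the intermediates
`ES i` for `i = 0, …, n-1` and `FS i` (denoting `FS_{i+1}`) for `i = 0, …, n-1`. -/
inductive PS (n : ℕ) : Type
  | E : PS n
  | F : PS n
  | S : Fin (n + 1) → PS n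
  | ES : Fin n → PS n
  | FS : Fin n → PS n
deriving DecidableEq, Fintype

/-- The sequential `n`-site phosphorylation–dephosphorylation cycle `𝒫ⁿ`, with the `6n`
reactions `S_i + E ⇌ ES_i`, `ES_i → S_{i+1} + E` for `i = 0, …, n-1` and
`S_i + F ⇌ FS_i`, `FS_i → S_{i-1} + F` for `i = 1, …, n`. -/
def Pcycle (n : ℕ) : Finset (Reaction (PS n)) :=
  (Finset.univ.image fun i : Fin n => (pairC (PS.S i.castSucc) PS.E, unitC (PS.ES i))) ∪
  (Finset.univ.image fun i : Fin n => (unitC (PS.ES i), pairC (PS.S i.castSucc) PS.E)) ∪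
  (Finset.univ.image fun i : Fin n => (unitC (PS.ES i), pairC (PS.S i.succ) PS.E)) ∪
  (Finset.univ.image fun i : Fin n => (pairC (PS.S i.succ) PS.F, unitC (PS.FS i))) ∪
  (Finset.univ.image fun i : Fin n => (unitC (PS.FS i), pairC (PS.S i.succ) PS.F)) ∪
  (Finset.univ.image fun i : Fin n => (unitC (PS.FS i), pairC (PS.S i.castSucc) PS.F))


section Aux

variable {S : Type} [Fintype S] [DecidableEq S]

lemma massAction_mem_stoich (R : Finset (Reaction S)) (κ : Reaction S → ℝ) (x : S → ℝ) :
    massAction R κ x ∈ stoichSubspace R := by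
  have : massAction R κ x =
      ∑ r ∈ R, (κ r * ∏ t, x t ^ r.1 t) • (fun s => ((r.2 s : ℝ) - (r.1 s : ℝ))) := by
    funext s
    simp [massAction, Finset.sum_apply, smul_eq_mul]
  rw [this]
  exact Submodule.sum_mem _ fun r hr => Submodule.smul_mem _ _
    (Submodule.subset_span ⟨r, hr, rfl⟩)

lemma inclR_injective (E : Finset S) : Function.Injective (inclR E) := by
  intro r r' h
  have h1 := congrArg Prod.fst h
  have h2 := congrArg Prod.snd h
  ext e
  · have := congrFun h1 e.val
    simpa [inclR, e.prop] using this
  · have := congrFun h2 e.val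
    simpa [inclR, e.prop] using this

lemma prod_inclR (E : Finset S) (z : S → ℝ) (y : {s : S // s ∈ E} → ℕ) :
    (∏ t : {s : S // s ∈ E}, z t.val ^ y t) =
      ∏ t : S, z t ^ (if h : t ∈ E then y ⟨t, h⟩ else 0) := by
  have h1 : (∏ t : S, z t ^ (if h : t ∈ E then y ⟨t, h⟩ else 0)) =
      ∏ t ∈ E, z t ^ (if h : t ∈ E then y ⟨t, h⟩ else 0) := by
    rw [← Finset.prod_subset E.subset_univ]
    intro t _ ht
    rw [dif_neg ht, pow_zero]
  rw [h1, Finset.prod_subtype E (fun x => Iff.rfl)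
      (fun t => z t ^ (if h : t ∈ E then y ⟨t, h⟩ else 0))]
  apply Finset.prod_congr rfl
  intro t _
  rw [dif_pos t.prop]

end Aux

/-- **Steady-State Projection.** Let `E` be independently conserved in `G`
and let `H` be any network whose species set is `E`. If `z` is a positive steady state of
the mass action system of the union network `G ∪ H` (whose right-hand side is the sum of
the right-hand sides of `G` and of `H`), then the projection of `z` onto the coordinates
of `E` is a positive steady state of `(H, κ|_H)`. -/
theorem steady_state_projection {S : Type} [Fintype S] [DecidableEq S]
    (R : Finset (Reaction S)) (E : Finset S)
    (hIC : IndepConserved R E)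
    (H : Finset (Reaction {s : S // s ∈ E}))
    (κ : Reaction S → ℝ)
    (hκG : ∀ r ∈ R, 0 < κ r) (hκH : ∀ r ∈ H, 0 < κ (inclR E r))
    (z : S → ℝ) (hz : ∀ s, 0 < z s)
    (hss : massAction R κ z + massAction (H.image (inclR E)) κ z = 0) :
    isPosSteadyState H (fun r => κ (inclR E r)) (fun e => z e.val) := by
  obtain ⟨L, hL⟩ := hIC
  set g := massAction (Finset.image (inclR E) H) κ z with hg
  -- g vanishes outside E
  have hgout : ∀ s ∉ E, g s = 0 := by
    intro s hs
    rw [hg, massAction]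
    apply Finset.sum_eq_zero
    intro r hr
    obtain ⟨r', _, rfl⟩ := Finset.mem_image.mp hr
    simp [inclR, hs]
  -- g vanishes on E
  have hgE : ∀ e ∈ E, g e = 0 := by
    intro e he
    have horth : ∑ s, L e s * (massAction R κ z) s = 0 :=
      (hL e he).1 _ (massAction_mem_stoich R κ z)
    have hneg : ∀ s, massAction R κ z s = -g s := by
      intro s
      have := congrFun hss s
      simp only [Pi.add_apply, Pi.zero_apply] at this
      linarith [this]
    have hsum : ∑ s, L e s * g s = 0 := by
      have : ∑ s, L e s * g s = -∑ s, L e s * (massAction R κ z) s := by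
        rw [← Finset.sum_neg_distrib]
        apply Finset.sum_congr rfl
        intro s _
        rw [hneg s]; ring
      rw [this, horth, neg_zero]
    have hone : ∑ s, L e s * g s = L e e * g e := by
      apply Finset.sum_eq_single
      · intro s _ hse
        by_cases hsE : s ∈ E
        · rw [(hL s hsE).2.2 e he (Ne.symm hse), zero_mul]
        · rw [hgout s hsE, mul_zero]
      · intro h
        exact absurd (Finset.mem_univ e) h
    rw [hone] at hsum
    exact (mul_eq_zero.mp hsum).resolve_left (hL e he).2.1
  refine ⟨fun e => hz e.val, ?_⟩
  funext e
  have key : massAction H (fun r => κ (inclR E r)) (fun e => z e.val) e = g e.val := by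
    rw [hg, massAction, massAction,
      Finset.sum_image (fun r _ r' _ h => inclR_injective E h)]
    apply Finset.sum_congr rfl
    intro r _
    rw [prod_inclR E z r.1]
    simp [inclR, e.prop]
  rw [Pi.zero_apply, key, hgE e.val e.prop]
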